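/- Let n ≥ 2, φ ∈ (0, 1/n), and p ∈ (log n / log(nφ), 0). For every x in the open simplex Δⁿ₊ with xᵢ > φ for all i, the diversity-weighted portfolio weights πᵢ := xᵢᵖ / Σⱼ xⱼᵖ satisfy maxᵢ πᵢ = (minᵢ xᵢ)ᵖ / Σⱼ xⱼᵖ < (nφ)ᵖ / n < 1. -/

import Mathlib

/-!
The largest weight sits at the smallest coordinate since `t ↦ t ^ p` is decreasing for `p < 0`.
By the power-mean inequality for the exponent `p < 0`, `∑ xⱼ ^ p ≥ n · (1 / n) ^ p`, and with
`min xᵢ > φ` this gives the bound `(n φ) ^ p / n`. The last inequality is the condition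
`p > log n / log (n φ)` after exponentiating, keeping in mind that `log (n φ) < 0`.
-/

open Finset Real

theorem Finset.sup'_comp_eq_apply_inf'_of_antitoneOn {ι α β : Type*} [LinearOrder α]
    [LinearOrder β] {s : Finset ι} (hs : s.Nonempty) {f : ι → α} {g : α → β} {t : Set α}
    (hg : AntitoneOn g t) (hf : ∀ i ∈ s, f i ∈ t) :
    s.sup' hs (fun i => g (f i)) = g (s.inf' hs f) := by
  obtain ⟨i₀, hi₀, hmin⟩ := s.exists_mem_eq_inf' hs f
  rw [hmin]
  refine le_antisymm (sup'_le hs _ fun i hi => ?_) (le_sup' (fun i => g (f i)) hi₀)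
  exact hg (hf i₀ hi₀) (hf i hi) (hmin ▸ inf'_le f hi)

namespace Real

/-- Weighted AM–GM twice: the geometric mean `G` of `z` is at most its arithmetic mean, and
`G ^ p` is the geometric mean of `z ^ p`. -/
theorem rpow_arith_mean_le_arith_mean_rpow_of_nonpos {ι : Type*} (s : Finset ι) (w z : ι → ℝ)
    (hw : ∀ i ∈ s, 0 ≤ w i) (hw' : ∑ i ∈ s, w i = 1) (hz : ∀ i ∈ s, 0 < z i) {p : ℝ}
    (hp : p ≤ 0) : (∑ i ∈ s, w i * z i) ^ p ≤ ∑ i ∈ s, w i * z i ^ p := by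
  set G := ∏ i ∈ s, z i ^ w i
  have hG : 0 < G := prod_pos fun i hi => rpow_pos_of_pos (hz i hi) _
  have hGp : G ^ p = ∏ i ∈ s, (z i ^ p) ^ w i := by
    rw [← finsetProd_rpow _ _ fun i hi => (rpow_pos_of_pos (hz i hi) _).le]
    refine prod_congr rfl fun i hi => ?_
    rw [← rpow_mul (hz i hi).le, ← rpow_mul (hz i hi).le, mul_comm]
  calc (∑ i ∈ s, w i * z i) ^ p
      ≤ G ^ p := rpow_le_rpow_of_nonpos hG
        (geom_mean_le_arith_mean_weighted s w z hw hw' fun i hi => (hz i hi).le) hp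
    _ = ∏ i ∈ s, (z i ^ p) ^ w i := hGp
    _ ≤ ∑ i ∈ s, w i * z i ^ p := geom_mean_le_arith_mean_weighted s w _ hw hw'
        fun i hi => (rpow_pos_of_pos (hz i hi) _).le

theorem rpow_lt_of_log_div_log_lt {a b p : ℝ} (ha₀ : 0 < a) (ha₁ : a < 1) (hb : 0 < b)
    (h : log b / log a < p) : a ^ p < b := by
  have hlog : p * log a < log b := (div_lt_iff_of_neg (log_neg ha₀ ha₁)).mp h
  rw [rpow_def_of_pos ha₀, ← exp_log hb, mul_comm]
  exact exp_lt_exp.mpr hlog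

end Real

/-- largest-weight bound for the negative-parameter
diversity-weighted portfolio under the no-failure condition. -/
theorem diversity_weighted_largest_weight_bound
    (n : ℕ) (hn : 2 ≤ n)
    (φ : ℝ) (hφ : 0 < φ ∧ φ < 1 / n)
    (p : ℝ) (hp : Real.log n / Real.log (n * φ) < p ∧ p < 0)
    (x : Fin n → ℝ) (hsum : ∑ i, x i = 1)
    (hnf : ∀ i, φ < x i) :
    (Finset.univ.sup' ⟨⟨0, by omega⟩, Finset.mem_univ _⟩
        (fun i => x i ^ p / ∑ j, x j ^ p) =
      (Finset.univ.inf' ⟨⟨0, by omega⟩, Finset.mem_univ _⟩ x) ^ p / ∑ j, x j ^ p) ∧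
    (Finset.univ.inf' ⟨⟨0, by omega⟩, Finset.mem_univ _⟩ x) ^ p / ∑ j, x j ^ p <
      (n * φ) ^ p / n ∧
    (n * φ) ^ p / n < 1 := by
  obtain ⟨hφ₀, hφn⟩ := hφ
  have hn₀ : (0 : ℝ) < n := by positivity
  have hx : ∀ i, 0 < x i := fun i => hφ₀.trans (hnf i)
  have hne : (univ : Finset (Fin n)).Nonempty := ⟨⟨0, by omega⟩, mem_univ _⟩
  set S := ∑ j, x j ^ p
  have hS : 0 < S := sum_pos (fun j _ => rpow_pos_of_pos (hx j) p) hne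
  have hnS : (n : ℝ) ≤ n ^ p * S := by
    have hmean := rpow_arith_mean_le_arith_mean_rpow_of_nonpos univ (fun _ => (n : ℝ)⁻¹) x
      (fun _ _ => by positivity) (by simp [hn₀.ne']) (fun i _ => hx i) hp.2.le
    rwa [← mul_sum, ← mul_sum, hsum, mul_one, inv_rpow hn₀.le,
      inv_le_iff_one_le_mul₀ (rpow_pos_of_pos hn₀ p), inv_mul_eq_div, div_mul_eq_mul_div,
      one_le_div hn₀, mul_comm] at hmean
  refine ⟨?_, ?_, ?_⟩
  · exact univ.sup'_comp_eq_apply_inf'_of_antitoneOn hne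
      (fun a ha b hb hab => div_le_div_of_nonneg_right
        (antitoneOn_rpow_Ioi_of_exponent_nonpos hp.2.le ha hb hab) hS.le)
      (fun i _ => hx i)
  · have hm : φ < univ.inf' hne x := (lt_inf'_iff _).mpr fun i _ => hnf i
    calc (univ.inf' hne x) ^ p / S
        < φ ^ p / S := div_lt_div_of_pos_right (rpow_lt_rpow_of_neg hφ₀ hm hp.2) hS
      _ ≤ (n * φ) ^ p / n := by
        rw [div_le_div_iff₀ hS hn₀, mul_rpow hn₀.le hφ₀.le]
        linarith [mul_le_mul_of_nonneg_left hnS (rpow_pos_of_pos hφ₀ p).le]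
  · have hnφ : (n : ℝ) * φ < 1 := by rwa [lt_div_iff₀ hn₀, mul_comm] at hφn
    rw [div_lt_one hn₀]
    exact rpow_lt_of_log_div_log_lt (by positivity) hnφ hn₀ hp.1
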